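/- For all integers m, q ∈ ℤ, the following are equivalent: (i) (0,m) ∼_{G(1,2)} (0,q); (ii) (m,0) ∼_H (q,0); (iii) there exists k ∈ ℤ with m = 2^k·q. -/

import Mathlib

/-- The ring of dyadic rationals `ℤ[1/2]`, as a subring of `ℚ`. -/
def DyadicRing : Subring ℚ := Subring.closure {(2:ℚ)⁻¹}

lemma DyadicRing.two_mem : (2:ℚ) ∈ DyadicRing := by
  convert add_mem (Subring.one_mem DyadicRing) (Subring.one_mem DyadicRing) using 1
  norm_num

lemma DyadicRing.half_mem : (2:ℚ)⁻¹ ∈ DyadicRing := Subring.subset_closure rfl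

/-- `2` as a unit of `ℤ[1/2]`. -/
def DyadicRing.two : DyadicRingˣ where
  val := ⟨2, DyadicRing.two_mem⟩
  inv := ⟨(2:ℚ)⁻¹, DyadicRing.half_mem⟩
  val_inv := by ext; norm_num
  inv_val := by ext; norm_num

/-- The powers `2^m` for `m : ℤ`, as elements of `ℤ[1/2]`. -/
def pow2 (m : ℤ) : DyadicRing := ((DyadicRing.two ^ m : DyadicRingˣ) : DyadicRing)

lemma pow2_add (m q : ℤ) : pow2 (m + q) = pow2 m * pow2 q := by
  simp [pow2, zpow_add]

lemma pow2_zero : pow2 0 = 1 := by simp [pow2]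

/-- The group `H = ℤ[1/2] ⋊ ℤ`, where `ℤ` acts by powers of `2`;
multiplication is `(r,m)·(s,q) = (r + 2^m·s, m+q)`. -/
@[ext] structure Hgrp where
  r : DyadicRing
  m : ℤ

instance : Mul Hgrp := ⟨fun x y => ⟨x.r + pow2 x.m * y.r, x.m + y.m⟩⟩
instance : One Hgrp := ⟨⟨0, 0⟩⟩
instance : Inv Hgrp := ⟨fun x => ⟨-(pow2 (-x.m) * x.r), -x.m⟩⟩

lemma Hgrp.mul_def (x y : Hgrp) : x * y = ⟨x.r + pow2 x.m * y.r, x.m + y.m⟩ := rfl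
lemma Hgrp.one_def : (1 : Hgrp) = ⟨0, 0⟩ := rfl
lemma Hgrp.inv_def (x : Hgrp) : x⁻¹ = ⟨-(pow2 (-x.m) * x.r), -x.m⟩ := rfl

instance : Group Hgrp where
  mul_assoc a b c := by
    simp only [Hgrp.mul_def, Hgrp.mk.injEq, pow2_add]
    constructor <;> ring
  one_mul a := by
    obtain ⟨r, m⟩ := a
    simp only [Hgrp.one_def, Hgrp.mul_def, Hgrp.mk.injEq, pow2_zero]
    constructor <;> ring
  mul_one a := by
    obtain ⟨r, m⟩ := a
    simp only [Hgrp.one_def, Hgrp.mul_def, Hgrp.mk.injEq, pow2_zero]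
    constructor <;> ring
  inv_mul_cancel a := by
    simp only [Hgrp.inv_def, Hgrp.mul_def, Hgrp.one_def, Hgrp.mk.injEq]
    constructor <;> ring

/-- Conjugacy in `H`. -/
def conjH (x y : Hgrp) : Prop := ∃ z : Hgrp, z * x * z⁻¹ = y

/-- The element `a = (1,0)` of `H`. -/
def aH : Hgrp := ⟨1, 0⟩
/-- The element `t = (0,1)` of `H`. -/
def tH : Hgrp := ⟨0, 1⟩
lemma aH_zpow (n : ℤ) : aH ^ n = Hgrp.mk (n : DyadicRing) 0 := by
  induction n using Int.induction_on with
  | zero => simp [Hgrp.one_def]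
  | succ k ih =>
      rw [zpow_add_one, ih]
      simp only [aH, Hgrp.mul_def, Hgrp.mk.injEq, pow2_zero]
      push_cast
      constructor <;> first | ring | simp | (push_cast; ring)
  | pred k ih =>
      rw [zpow_sub_one, ih]
      simp only [aH, Hgrp.inv_def, Hgrp.mul_def, Hgrp.mk.injEq, pow2_zero, neg_zero]
      push_cast
      constructor <;> first | ring | simp | (push_cast; ring)

lemma tH_zpow (n : ℤ) : tH ^ n = Hgrp.mk 0 n := by
  induction n using Int.induction_on with
  | zero => simp [Hgrp.one_def]
  | succ k ih =>
      rw [zpow_add_one, ih]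
      simp [tH, Hgrp.mul_def]
  | pred k ih =>
      rw [zpow_sub_one, ih]
      simp only [tH, Hgrp.inv_def, Hgrp.mul_def, Hgrp.mk.injEq]
      constructor <;> ring

lemma aH_zpow_injective : Function.Injective fun n : ℤ => aH ^ n := by
  intro x y h
  simp only [aH_zpow, Hgrp.mk.injEq] at h
  have : ((x : DyadicRing) : ℚ) = ((y : DyadicRing) : ℚ) := by rw [h.1]
  simpa using this

lemma tH_zpow_injective : Function.Injective fun n : ℤ => tH ^ n := by
  intro x y h
  simp only [tH_zpow, Hgrp.mk.injEq] at h
  exact h.2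

/-- The homomorphism `ℤ →* G` given by powers of `g`. -/
def zintHom {G : Type*} [Group G] (g : G) : Multiplicative ℤ →* G where
  toFun n := g ^ (Multiplicative.toAdd n)
  map_one' := by simp
  map_mul' x y := by simp [zpow_add]

/-- For `g` with `n ↦ g ^ n` injective, `⟨g⟩ ≅ ℤ`. -/
noncomputable def zpowMulEquiv {G : Type*} [Group G] (g : G)
    (hg : Function.Injective fun n : ℤ => g ^ n) :
    Multiplicative ℤ ≃* Subgroup.zpowers g := by
  refine MulEquiv.ofBijective
    ((zintHom g).codRestrict (Subgroup.zpowers g).toSubmonoid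
      (fun n => Subgroup.mem_zpowers_iff.mpr ⟨Multiplicative.toAdd n, rfl⟩)) ⟨?_, ?_⟩
  · intro x y h
    have : g ^ (Multiplicative.toAdd x) = g ^ (Multiplicative.toAdd y) :=
      congrArg Subtype.val h
    exact hg this
  · rintro ⟨x, hx⟩
    obtain ⟨n, hn⟩ := Subgroup.mem_zpowers_iff.mp hx
    exact ⟨Multiplicative.ofAdd n, Subtype.ext hn⟩

/-- The associated isomorphism `⟨a⟩ ≅ ⟨t⟩`, `a ↦ t`, of the HNN extension defining
the Baumslag group. -/
noncomputable def φBS : Subgroup.zpowers aH ≃* Subgroup.zpowers tH :=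
  (zpowMulEquiv aH aH_zpow_injective).symm.trans (zpowMulEquiv tH tH_zpow_injective)

/-- The Baumslag group `G(1,2)`, as HNN extension of `H = BS(1,2)` with stable letter `b`,
associated subgroups `⟨a⟩` and `⟨t⟩`, and associated isomorphism `a ↦ t`. -/
noncomputable abbrev BG := HNNExtension Hgrp (Subgroup.zpowers aH) (Subgroup.zpowers tH) φBS

/-- The embedding of `H` into the Baumslag group. -/
noncomputable def ι : Hgrp →* BG := HNNExtension.of

/-- The stable letter `b` of the Baumslag group. -/
noncomputable def bBG : BG := HNNExtension.t

/-- Conjugacy in the Baumslag group `G(1,2)`. -/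
def conjBG (x y : BG) : Prop := ∃ z : BG, z * x * z⁻¹ = y

/-!
In an HNN extension of `G`, two elements of `G` that are conjugate in the extension are related by
every equivalence relation on `G` that contains conjugacy in `G` and identifies each `a ∈ A` with
`φ a`: if a reduced word `w` satisfies `w * x = y * w`, comparing the reduced words of both sides
puts the conjugate of `y` by the head of `w` into the associated subgroup on which the first stable
letter acts by `φ^{±1}`, so one can peel that letter off and induct.

For `G(1,2)` take the relation "equal up to a power of `2`" on the weight of `(r, m) ∈ H`, which is
`r` if `m = 0` and `m` otherwise: conjugating `(r, 0)` in `H` multiplies `r` by a power of `2`,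
conjugating `(r, m)` with `m ≠ 0` keeps `m`, and `(n, 0) ↦ (0, n)` keeps the weight `n`.
Since `(0, m)` has weight `m`, conjugacy of `(0, m)` and `(0, q)` in `G(1,2)` forces `m = 2^k q`.
Conversely `b (n, 0) b⁻¹ = (0, n)` transports conjugacy in `H` to `G(1,2)`.
-/

namespace HNNExtension

open NormalWord

variable {G : Type*} [Group G] {A B : Subgroup G} {φ : A ≃* B}

theorem NormalWord.ReducedWord.exists_prod_mul_of (w : ReducedWord G A B) (hw : w.toList ≠ [])
    (g : G) : ∃ w' : ReducedWord G A B, w'.head = w.head ∧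
      w'.toList.map Prod.fst = w.toList.map Prod.fst ∧ w'.prod φ = w.prod φ * of g := by
  obtain ⟨head, l, chain⟩ := w
  obtain ⟨l, p, rfl⟩ := List.eq_nil_or_concat' l |>.resolve_left hw
  refine ⟨⟨head, l ++ [(p.1, p.2 * g)], ?_⟩, rfl, by simp, ?_⟩
  · rw [List.isChain_append] at chain ⊢
    exact ⟨chain.1, List.isChain_singleton _, by simpa using chain.2.2⟩
  · simp [ReducedWord.prod, mul_assoc]

theorem NormalWord.ReducedWord.conj_head_mem_toSubgroup (w : ReducedWord G A B) {u : ℤˣ}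
    (hu : u ∈ w.toList.head?.map Prod.fst) {x y : G} (h : w.prod φ * of x = of y * w.prod φ) :
    w.head⁻¹ * y * w.head ∈ toSubgroup A B (-u) := by
  obtain ⟨w', hw'head, hw'fst, hw'prod⟩ :=
    w.exists_prod_mul_of (φ := φ) (by rintro hw; simp [hw] at hu) x
  have hprod : w'.prod φ = (⟨y * w.head, w.toList, w.chain⟩ : ReducedWord G A B).prod φ := by
    rw [hw'prod, h]
    simp [ReducedWord.prod, mul_assoc]
  have hu' : u ∈ w'.toList.head?.map Prod.fst := by rwa [← List.head?_map, hw'fst, List.head?_map]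
  simpa [hw'head, mul_assoc] using (ReducedWord.map_fst_eq_and_of_prod_eq φ hprod).2 u hu'

theorem exists_rel_of_mul_t_zpow {r : G → G → Prop} (hr : Equivalence r)
    (hφ : ∀ a : A, r a (φ a)) (u : ℤˣ) {c : G} (hc : c ∈ toSubgroup A B (-u)) :
    ∃ c', r c' c ∧ (of c : HNNExtension G A B φ) * t ^ (u : ℤ) = t ^ (u : ℤ) * of c' := by
  rcases Int.units_eq_one_or u with rfl | rfl
  · rw [toSubgroup_neg_one] at hc
    exact ⟨φ.symm ⟨c, hc⟩, by simpa using hφ (φ.symm ⟨c, hc⟩), by simpa using of_mul_t ⟨c, hc⟩⟩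
  · rw [neg_neg, toSubgroup_one] at hc
    exact ⟨φ ⟨c, hc⟩, hr.symm (hφ ⟨c, hc⟩), by simpa using of_mul_inv_t ⟨c, hc⟩⟩

theorem rel_of_prod_mul_of_eq {r : G → G → Prop} (hr : Equivalence r)
    (hconj : ∀ x y, IsConj x y → r x y) (hφ : ∀ a : A, r a (φ a)) (w : ReducedWord G A B)
    {x y : G} (h : w.prod φ * of x = of y * w.prod φ) : r x y := by
  obtain ⟨head, l, chain⟩ := w
  induction l generalizing head y with
  | nil =>
    refine hconj _ _ (isConj_iff.mpr ⟨head, ?_⟩)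
    simp only [ReducedWord.prod, List.map_nil, List.prod_nil, mul_one, ← map_mul] at h
    rw [of_injective φ h]
    group
  | cons p l ih =>
    set w : ReducedWord G A B := ⟨head, p :: l, chain⟩
    have hc : head⁻¹ * y * head ∈ toSubgroup A B (-p.1) :=
      w.conj_head_mem_toSubgroup (by simp [w]) h
    obtain ⟨c', hc'r, hc't⟩ := exists_rel_of_mul_t_zpow hr hφ p.1 hc
    set v : ReducedWord G A B := ⟨p.2, l, (List.isChain_cons.1 chain).2⟩
    have hwv : w.prod φ = of head * t ^ (p.1 : ℤ) * v.prod φ := by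
      simp [w, v, ReducedWord.prod, mul_assoc]
    have hv : v.prod φ * of x = of c' * v.prod φ := by
      refine mul_left_cancel (a := t ^ (p.1 : ℤ)) ?_
      calc t ^ (p.1 : ℤ) * (v.prod φ * of x) = of head⁻¹ * (w.prod φ * of x) := by
            rw [hwv, map_inv]; group
        _ = of head⁻¹ * (of y * w.prod φ) := by rw [h]
        _ = of (head⁻¹ * y * head) * t ^ (p.1 : ℤ) * v.prod φ := by
            rw [hwv, map_mul, map_mul, map_inv]; group
        _ = t ^ (p.1 : ℤ) * (of c' * v.prod φ) := by rw [hc't, mul_assoc]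
    exact hr.trans (ih _ _ hv) (hr.trans hc'r (hconj _ _ (isConj_iff.mpr ⟨head, by group⟩)))

theorem rel_of_isConj_of {r : G → G → Prop} (hr : Equivalence r)
    (hconj : ∀ x y, IsConj x y → r x y) (hφ : ∀ a : A, r a (φ a)) {x y : G}
    (h : IsConj (of x : HNNExtension G A B φ) (of y)) : r x y := by
  obtain ⟨z, hzxy⟩ := isConj_iff.mp h
  obtain ⟨d⟩ := TransversalPair.nonempty G A B
  have hz : (z • (empty : NormalWord d)).prod φ = z := by
    rw [prod_smul, prod_empty, mul_one]
  refine rel_of_prod_mul_of_eq hr hconj hφ (z • (empty : NormalWord d)).toReducedWord ?_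
  rw [hz, ← hzxy]
  group

end HNNExtension

lemma pow2_neg_mul_self (k : ℤ) : pow2 (-k) * pow2 k = 1 := by
  rw [← pow2_add, neg_add_cancel, pow2_zero]

def SameUpToPow2 (c d : DyadicRing) : Prop := ∃ k : ℤ, c = pow2 k * d

lemma SameUpToPow2.equivalence : Equivalence SameUpToPow2 where
  refl c := ⟨0, by rw [pow2_zero, one_mul]⟩
  symm := by
    rintro c d ⟨k, rfl⟩
    exact ⟨-k, by rw [← mul_assoc, pow2_neg_mul_self, one_mul]⟩
  trans := by
    rintro c d e ⟨k, rfl⟩ ⟨l, rfl⟩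
    exact ⟨k + l, by rw [pow2_add, mul_assoc]⟩

namespace Hgrp

lemma m_conj (z x : Hgrp) : (z * x * z⁻¹).m = x.m := by
  simp only [mul_def, inv_def]
  ring

lemma conj_mk_zero (z : Hgrp) (c : DyadicRing) : z * ⟨c, 0⟩ * z⁻¹ = ⟨pow2 z.m * c, 0⟩ := by
  have h : pow2 z.m * pow2 (-z.m) = 1 := by rw [← pow2_add, add_neg_cancel, pow2_zero]
  simp only [mul_def, inv_def, mk.injEq, add_zero]
  constructor
  · linear_combination (-z.r) * h
  · ring

def weight (x : Hgrp) : DyadicRing := if x.m = 0 then x.r else x.m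

lemma weight_mk_zero (c : DyadicRing) : weight ⟨c, 0⟩ = c := if_pos rfl

lemma weight_zero_mk (n : ℤ) : weight ⟨0, n⟩ = n := by
  by_cases hn : n = 0 <;> simp [weight, hn]

lemma sameUpToPow2_weight_conj (z x : Hgrp) : SameUpToPow2 (weight (z * x * z⁻¹)) (weight x) := by
  by_cases hx : x.m = 0
  · obtain ⟨c, n⟩ := x
    obtain rfl : n = 0 := hx
    rw [conj_mk_zero, weight_mk_zero, weight_mk_zero]
    exact ⟨z.m, rfl⟩
  · rw [weight, weight, m_conj, if_neg hx, if_neg hx]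
    exact SameUpToPow2.equivalence.refl _

end Hgrp

lemma conjH_mk_zero_iff (c d : DyadicRing) : conjH ⟨c, 0⟩ ⟨d, 0⟩ ↔ SameUpToPow2 c d := by
  simp only [conjH, Hgrp.conj_mk_zero]
  constructor
  · rintro ⟨z, hz⟩
    obtain ⟨rfl, -⟩ := Hgrp.mk.inj hz
    exact ⟨-z.m, by rw [← mul_assoc, pow2_neg_mul_self, one_mul]⟩
  · rintro ⟨k, rfl⟩
    exact ⟨⟨0, -k⟩, by simp only [← mul_assoc, pow2_neg_mul_self, one_mul]⟩

lemma φBS_apply {a : Subgroup.zpowers aH} {n : ℤ} (ha : (a : Hgrp) = ⟨n, 0⟩) :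
    (φBS a : Hgrp) = ⟨0, n⟩ := by
  have h : (zpowMulEquiv aH aH_zpow_injective).symm a = Multiplicative.ofAdd n := by
    rw [MulEquiv.symm_apply_eq]
    exact Subtype.ext (ha.trans (aH_zpow n).symm)
  simp only [φBS, MulEquiv.trans_apply, h]
  exact tH_zpow n

lemma isConj_ι_mk_zero (n : ℤ) : IsConj (ι ⟨n, 0⟩) (ι ⟨0, n⟩) := by
  let a : Subgroup.zpowers aH := ⟨⟨n, 0⟩, n, aH_zpow n⟩
  refine isConj_iff.mpr ⟨bBG, ?_⟩
  rw [ι, ← φBS_apply (a := a) rfl]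
  exact (HNNExtension.equiv_eq_conj a).symm

lemma conjBG_of_conjH {m q : ℤ} (h : conjH ⟨m, 0⟩ ⟨q, 0⟩) : conjBG (ι ⟨0, m⟩) (ι ⟨0, q⟩) :=
  isConj_iff.mp <| (isConj_ι_mk_zero m).symm.trans <|
    (ι.map_isConj (isConj_iff.mpr h)).trans (isConj_ι_mk_zero q)

lemma sameUpToPow2_weight_of_conjBG {x y : Hgrp} (h : conjBG (ι x) (ι y)) :
    SameUpToPow2 x.weight y.weight := by
  refine HNNExtension.rel_of_isConj_of (SameUpToPow2.equivalence.comap Hgrp.weight) ?_ ?_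
    (isConj_iff.mpr h)
  · intro x y hxy
    obtain ⟨z, rfl⟩ := isConj_iff.mp hxy
    exact SameUpToPow2.equivalence.symm (Hgrp.sameUpToPow2_weight_conj z x)
  · intro a
    obtain ⟨n, hn⟩ := a.2
    have ha : (a : Hgrp) = ⟨n, 0⟩ := hn.symm.trans (aH_zpow n)
    rw [Function.onFun, ha, φBS_apply ha, Hgrp.weight_mk_zero, Hgrp.weight_zero_mk]
    exact SameUpToPow2.equivalence.refl _

theorem stmt5 (m q : ℤ) :
    (conjBG (ι ⟨0, m⟩) (ι ⟨0, q⟩) ↔ conjH ⟨(m : DyadicRing), 0⟩ ⟨(q : DyadicRing), 0⟩) ∧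
    (conjH ⟨(m : DyadicRing), 0⟩ ⟨(q : DyadicRing), 0⟩ ↔
      ∃ k : ℤ, (m : DyadicRing) = pow2 k * (q : DyadicRing)) := by
  refine ⟨⟨fun h => (conjH_mk_zero_iff _ _).mpr ?_, conjBG_of_conjH⟩, conjH_mk_zero_iff _ _⟩
  simpa only [Hgrp.weight_zero_mk] using sameUpToPow2_weight_of_conjBG h
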